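/- Let d ≥ 1, let λ : ℤ^d → ℝ satisfy λ_j ≠ λ_0 for all j ≠ 0, let α > 0 and 0 < δ < α with δ ≤ 1, and let X : ℤ^d × ℤ^d → ℂ be a matrix with ‖X − I‖_α < (δ/3)^d, where I is the identity matrix. Then the bounded operator on ℓ²(ℤ^d) defined by X is invertible, the matrix of its inverse X^{−1} (with entries ⟨e_n, X^{−1} e_m⟩ in the canonical basis) satisfies ‖X^{−1} − I‖_{α−δ} < ∞, and ‖X^{−1} − I‖_{α−δ} ≤ ‖X − I‖_α / (1 − (3/δ)^d ‖X − I‖_α). -/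

import Mathlib

open scoped ENNReal

noncomputable section

abbrev Zd (d : ℕ) := Fin d → ℤ

/-- `|k| = |k₁| + ⋯ + |k_d|` as a real number. -/
def absZ {d : ℕ} (k : Zd d) : ℝ := ∑ i, |(k i : ℝ)|

/-- The T-norm of a sequence `a : ℤ^d → ℂ` relative to the base sequence `lam`. -/
def Tnorm {d : ℕ} (lam : Zd d → ℝ) (a : Zd d → ℂ) : ℝ≥0∞ :=
  (⨆ n : Zd d, ENNReal.ofReal (‖a n‖)) +
    ⨆ n : Zd d, ⨆ j : {j : Zd d // j ≠ 0},
      ENNReal.ofReal (‖a (n + j.1) - a n‖ / |lam j.1 - lam 0|)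

/-- The α-norm of a matrix `A : ℤ^d × ℤ^d → ℂ`. -/
def matNorm {d : ℕ} (lam : Zd d → ℝ) (α : ℝ) (A : Zd d → Zd d → ℂ) : ℝ≥0∞ :=
  ⨆ k : Zd d, ENNReal.ofReal (Real.exp (α * absZ k)) * Tnorm lam (fun n => A n (n + k))

/-- The identity matrix on `ℤ^d`. -/
def idMat (d : ℕ) : Zd d → Zd d → ℂ := fun n m => if n = m then 1 else 0


/-!
Write `X = I - B`, so that `‖B‖_α = ‖X - I‖_α =: ε`. The key estimate is
`‖A B‖_{α-δ} ≤ E(δ) ‖A‖_α ‖B‖_{α-δ}` with `E(δ) = ∑_k e^{-δ|k|} ≤ (3/δ)^d`: the entries of `A B`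
are bounded by discrete convolutions of exponential envelopes, its differences along the
diagonals by a discrete Leibniz rule, and giving up `δ` in the decay rate makes these
convolutions summable. Hence `‖B^(i+1)‖_{α-δ} ≤ ε (E(δ) ε)^i`, the Neumann series
`Y = I + ∑_{i ≥ 1} B^i` converges in `‖·‖_{α-δ}` with `‖Y - I‖_{α-δ} ≤ ε / (1 - E(δ) ε)`, and the
exponential off-diagonal decay of all matrices involved justifies the exchanges of summation in
`(I - B) Y = Y (I - B) = I`.
-/

open Real

section ExpSums

variable {d : ℕ}

lemma absZ_nonneg (k : Zd d) : 0 ≤ absZ k :=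
  Finset.sum_nonneg fun _ _ => abs_nonneg _

lemma absZ_le_add_sub (k t : Zd d) : absZ k ≤ absZ t + absZ (k - t) := by
  rw [absZ, absZ, absZ, ← Finset.sum_add_distrib]
  refine Finset.sum_le_sum fun i _ => ?_
  have : (k i : ℝ) = t i + ((k - t) i : ℝ) := by push_cast [Pi.sub_apply]; ring
  rw [this]
  exact abs_add_le _ _

lemma absZ_cons (a : ℤ) (k : Zd d) : absZ (Fin.cons a k : Zd (d + 1)) = |(a : ℝ)| + absZ k := by
  simp [absZ, Fin.sum_univ_succ]

lemma hasSum_exp_neg_mul_abs_int {t : ℝ} (ht : 0 < t) :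
    HasSum (fun m : ℤ => exp (-(t * |(m : ℝ)|))) ((1 + exp (-t)) / (1 - exp (-t))) := by
  set r := exp (-t)
  have hr1 : r < 1 := exp_lt_one_iff.mpr (neg_lt_zero.mpr ht)
  have hgeo : HasSum (fun n : ℕ => r ^ n) (1 - r)⁻¹ :=
    hasSum_geometric_of_lt_one (exp_pos _).le hr1
  have hgeo' : HasSum (fun n : ℕ => r ^ (n + 1)) (r * (1 - r)⁻¹) := by
    simpa [pow_succ, mul_comm] using hgeo.mul_left r
  have hpow : (fun m : ℤ => exp (-(t * |(m : ℝ)|))) = fun m => r ^ m.natAbs := by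
    ext m
    rw [← exp_nat_mul, Nat.cast_natAbs, Int.cast_abs]
    ring_nf
  rw [hpow]
  convert hgeo.int_rec hgeo' using 1
  · ext (n | n) <;> simp [Int.natAbs]
  · field_simp [(sub_pos.mpr hr1).ne']

lemma hasSum_exp_neg_mul_absZ {t : ℝ} (ht : 0 < t) :
    HasSum (fun k : Zd d => exp (-(t * absZ k))) (((1 + exp (-t)) / (1 - exp (-t))) ^ d) := by
  induction d with
  | zero => simp [absZ]
  | succ d ih =>
    have h1 := hasSum_exp_neg_mul_abs_int ht
    have hprod := h1.mul ih (h1.summable.mul_of_nonneg ih.summable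
      (fun _ => (exp_pos _).le) (fun _ => (exp_pos _).le))
    rw [pow_succ', ← (Fin.consEquiv fun _ => ℤ).hasSum_iff]
    refine hprod.congr_fun fun p => ?_
    rw [Function.comp_apply, show (Fin.consEquiv fun _ => ℤ) p = Fin.cons p.1 p.2 from rfl,
      absZ_cons, ← exp_add]
    ring_nf

lemma one_add_exp_neg_div_le {t : ℝ} (ht : 0 < t) (ht1 : t ≤ 1) :
    (1 + exp (-t)) / (1 - exp (-t)) ≤ 3 / t := by
  have hr : exp (-t) ≤ 1 / (1 + t) := by
    rw [exp_neg, one_div]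
    exact inv_anti₀ (by linarith) (by linarith [add_one_le_exp t])
  have hpos : 0 < 1 - exp (-t) := by
    linarith [exp_lt_one_iff.mpr (neg_lt_zero.mpr ht)]
  rw [div_le_div_iff₀ hpos ht]
  have h1t : (1 + t) * exp (-t) ≤ 1 := by
    rwa [le_div_iff₀' (by linarith)] at hr
  nlinarith [exp_pos (-t)]

def expSum (d : ℕ) (δ : ℝ) : ℝ := ∑' k : Zd d, exp (-(δ * absZ k))

lemma summable_exp_neg_mul_absZ {t : ℝ} (ht : 0 < t) :
    Summable fun k : Zd d => exp (-(t * absZ k)) :=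
  (hasSum_exp_neg_mul_absZ ht).summable

lemma summable_exp_neg_mul_absZ_sub {t : ℝ} (ht : 0 < t) (n : Zd d) :
    Summable fun l : Zd d => exp (-(t * absZ (l - n))) :=
  (Equiv.subRight n).summable_iff.mpr (summable_exp_neg_mul_absZ ht)

lemma expSum_nonneg {δ : ℝ} : 0 ≤ expSum d δ :=
  tsum_nonneg fun _ => (exp_pos _).le

lemma expSum_le {δ : ℝ} (hδ : 0 < δ) (hδ1 : δ ≤ 1) : expSum d δ ≤ (3 / δ) ^ d := by
  rw [expSum, (hasSum_exp_neg_mul_absZ hδ).tsum_eq]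
  have hpos : 0 < 1 - exp (-δ) := by
    linarith [exp_lt_one_iff.mpr (neg_lt_zero.mpr hδ)]
  exact pow_le_pow_left₀ (by positivity) (one_add_exp_neg_div_le hδ hδ1) d

lemma exp_mul_exp_le {α δ : ℝ} (hδα : δ ≤ α) (k t : Zd d) :
    exp (-(α * absZ t)) * exp (-((α - δ) * absZ (k - t)))
      ≤ exp (-(δ * absZ t)) * exp (-((α - δ) * absZ k)) := by
  rw [← exp_add, ← exp_add, exp_le_exp]
  nlinarith [absZ_le_add_sub k t]

lemma summable_exp_mul_exp {α δ : ℝ} (hδ : 0 < δ) (hδα : δ ≤ α) (k : Zd d) :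
    Summable fun t : Zd d => exp (-(α * absZ t)) * exp (-((α - δ) * absZ (k - t))) :=
  .of_nonneg_of_le (fun _ => by positivity) (exp_mul_exp_le hδα k)
    ((summable_exp_neg_mul_absZ hδ).mul_right _)

lemma tsum_exp_mul_exp_le {α δ : ℝ} (hδ : 0 < δ) (hδα : δ ≤ α) (k : Zd d) :
    ∑' t : Zd d, exp (-(α * absZ t)) * exp (-((α - δ) * absZ (k - t)))
      ≤ expSum d δ * exp (-((α - δ) * absZ k)) := by
  rw [expSum, ← tsum_mul_right]
  exact (summable_exp_mul_exp hδ hδα k).tsum_le_tsum (exp_mul_exp_le hδα k)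
    ((summable_exp_neg_mul_absZ hδ).mul_right _)

end ExpSums

lemma tsum_comm_of_norm_le_mul {ι κ E : Type*} [NormedAddCommGroup E] [CompleteSpace E]
    {f : ι → κ → E} {g : ι → ℝ} {h : κ → ℝ} (hg : Summable g) (hh : Summable h)
    (hg0 : 0 ≤ g) (hh0 : 0 ≤ h) (hf : ∀ i k, ‖f i k‖ ≤ g i * h k) :
    ∑' i, ∑' k, f i k = ∑' k, ∑' i, f i k :=
  (Summable.tsum_comm (.of_norm_bounded (hg.mul_of_nonneg hh hg0 hh0) fun p => hf p.1 p.2)).symm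

section MatMul

variable {d : ℕ}

def matMul (A B : Zd d → Zd d → ℂ) : Zd d → Zd d → ℂ := fun n m => ∑' l, A n l * B l m

lemma matMul_apply_eq_tsum_add (A B : Zd d → Zd d → ℂ) (n m : Zd d) :
    matMul A B n m = ∑' t, A n (n + t) * B (n + t) m :=
  ((Equiv.addLeft n).tsum_eq fun l => A n l * B l m).symm

@[simp] lemma matMul_idMat_left (A : Zd d → Zd d → ℂ) : matMul (idMat d) A = A := by
  funext n m
  rw [matMul, tsum_eq_single n fun l hl => by simp [idMat, Ne.symm hl]]
  simp [idMat]

@[simp] lemma matMul_idMat_right (A : Zd d → Zd d → ℂ) : matMul A (idMat d) = A := by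
  funext n m
  rw [matMul, tsum_eq_single m fun l hl => by simp [idMat, hl]]
  simp [idMat]

variable {A B C : Zd d → Zd d → ℂ}

lemma matMul_sub_left (hA : ∀ n m, Summable fun l => A n l * C l m)
    (hB : ∀ n m, Summable fun l => B n l * C l m) :
    matMul (A - B) C = matMul A C - matMul B C := by
  funext n m
  simp only [matMul, Pi.sub_apply, sub_mul]
  exact (hA n m).tsum_sub (hB n m)

lemma matMul_sub_right (hB : ∀ n m, Summable fun l => A n l * B l m)
    (hC : ∀ n m, Summable fun l => A n l * C l m) :
    matMul A (B - C) = matMul A B - matMul A C := by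
  funext n m
  simp only [matMul, Pi.sub_apply, mul_sub]
  exact (hB n m).tsum_sub (hC n m)

lemma matMul_add_left (hA : ∀ n m, Summable fun l => A n l * C l m)
    (hB : ∀ n m, Summable fun l => B n l * C l m) :
    matMul (A + B) C = matMul A C + matMul B C := by
  funext n m
  simp only [matMul, Pi.add_apply, add_mul]
  exact (hA n m).tsum_add (hB n m)

lemma matMul_add_right (hB : ∀ n m, Summable fun l => A n l * B l m)
    (hC : ∀ n m, Summable fun l => A n l * C l m) :
    matMul A (B + C) = matMul A B + matMul A C := by
  funext n m
  simp only [matMul, Pi.add_apply, mul_add]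
  exact (hB n m).tsum_add (hC n m)

def IsMatInverse (X Y : Zd d → Zd d → ℂ) : Prop :=
  (∀ n m, Summable fun l => ‖X n l * Y l m‖) ∧ (∀ n m, Summable fun l => ‖Y n l * X l m‖) ∧
    matMul X Y = idMat d ∧ matMul Y X = idMat d

def ExpBounded (γ c : ℝ) (A : Zd d → Zd d → ℂ) : Prop :=
  ∀ n m, ‖A n m‖ ≤ c * exp (-(γ * absZ (m - n)))

variable {γ a b c : ℝ}

lemma expBounded_idMat : ExpBounded γ 1 (idMat d) := by
  intro n m
  by_cases h : n = m
  · simp [h, idMat, absZ]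
  · simp only [idMat, if_neg h, norm_zero]
    positivity

lemma ExpBounded.nonneg (hA : ExpBounded γ c A) : 0 ≤ c :=
  nonneg_of_mul_nonneg_left ((norm_nonneg _).trans (hA 0 0)) (exp_pos _)

lemma ExpBounded.add (hA : ExpBounded γ a A) (hB : ExpBounded γ b B) :
    ExpBounded γ (a + b) (A + B) := fun n m =>
  (norm_add_le _ _).trans ((add_le_add (hA n m) (hB n m)).trans_eq (add_mul _ _ _).symm)

lemma ExpBounded.sub (hA : ExpBounded γ a A) (hB : ExpBounded γ b B) :
    ExpBounded γ (a + b) (A - B) := fun n m =>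
  (norm_sub_le _ _).trans ((add_le_add (hA n m) (hB n m)).trans_eq (add_mul _ _ _).symm)

lemma ExpBounded.tsum {W : ℕ → Zd d → Zd d → ℂ} {u : ℕ → ℝ} (hu : Summable u)
    (hW : ∀ i, ExpBounded γ (u i) (W i)) :
    ExpBounded γ (∑' i, u i) fun n m => ∑' i, W i n m := fun n m => by
  rw [← tsum_mul_right]
  exact tsum_of_norm_bounded (hu.mul_right _).hasSum fun i => hW i n m

lemma ExpBounded.summable {W : ℕ → Zd d → Zd d → ℂ} {u : ℕ → ℝ} (hu : Summable u)
    (hW : ∀ i, ExpBounded γ (u i) (W i)) (n m : Zd d) : Summable fun i => W i n m :=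
  .of_norm_bounded (hu.mul_right _) fun i => hW i n m

lemma ExpBounded.norm_mul_le (hγ : 0 ≤ γ) (hA : ExpBounded γ a A) (hB : ExpBounded γ b B)
    (n l m : Zd d) : ‖A n l * B l m‖ ≤ a * b * exp (-(γ * absZ (l - n))) := by
  have hBlm : ‖B l m‖ ≤ b := (hB l m).trans
    (mul_le_of_le_one_right hB.nonneg (exp_le_one_iff.mpr (by nlinarith [absZ_nonneg (m - l)])))
  rw [norm_mul]
  calc ‖A n l‖ * ‖B l m‖ ≤ a * exp (-(γ * absZ (l - n))) * b :=
        mul_le_mul (hA n l) hBlm (norm_nonneg _) (mul_nonneg hA.nonneg (exp_pos _).le)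
    _ = a * b * exp (-(γ * absZ (l - n))) := by ring

lemma ExpBounded.summable_norm_mul (hγ : 0 < γ) (hA : ExpBounded γ a A)
    (hB : ExpBounded γ b B) (n m : Zd d) : Summable fun l => ‖A n l * B l m‖ :=
  .of_nonneg_of_le (fun _ => norm_nonneg _) (fun l => hA.norm_mul_le hγ.le hB n l m)
    ((summable_exp_neg_mul_absZ_sub hγ n).mul_left _)

lemma ExpBounded.summable_mul (hγ : 0 < γ) (hA : ExpBounded γ a A)
    (hB : ExpBounded γ b B) (n m : Zd d) : Summable fun l => A n l * B l m :=
  (hA.summable_norm_mul hγ hB n m).of_norm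

end MatMul

section Neumann

variable {d : ℕ} {γ a b c : ℝ} {A B C : Zd d → Zd d → ℂ}

lemma exp_mul_exp_le_exp_half_mul (hγ : 0 ≤ γ) (n l₁ l₂ : Zd d) :
    exp (-(γ * absZ (l₁ - n))) * exp (-(γ * absZ (l₂ - l₁)))
      ≤ exp (-(γ / 2 * absZ (l₁ - n))) * exp (-(γ / 2 * absZ (l₂ - n))) := by
  have h := absZ_le_add_sub (l₂ - n) (l₁ - n)
  rw [sub_sub_sub_cancel_right] at h
  rw [← exp_add, ← exp_add, exp_le_exp]
  nlinarith [absZ_nonneg (l₁ - n), absZ_nonneg (l₂ - l₁)]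

lemma matMul_assoc (hγ : 0 < γ) (hA : ExpBounded γ a A) (hB : ExpBounded γ b B)
    (hC : ExpBounded γ c C) : matMul (matMul A B) C = matMul A (matMul B C) := by
  funext n m
  simp only [matMul, ← tsum_mul_left, ← tsum_mul_right, mul_assoc]
  have hγ2 : 0 < γ / 2 := half_pos hγ
  refine tsum_comm_of_norm_le_mul (summable_exp_neg_mul_absZ_sub hγ2 n)
    ((summable_exp_neg_mul_absZ_sub hγ2 n).mul_left (a * (b * c)))
    (fun _ => (exp_pos _).le) (fun _ => mul_nonneg (mul_nonneg hA.nonneg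
      (mul_nonneg hB.nonneg hC.nonneg)) (exp_pos _).le) fun l₂ l₁ => ?_
  rw [norm_mul]
  calc ‖A n l₁‖ * ‖B l₁ l₂ * C l₂ m‖
      ≤ a * exp (-(γ * absZ (l₁ - n))) * (b * c * exp (-(γ * absZ (l₂ - l₁)))) :=
        mul_le_mul (hA n l₁) (hB.norm_mul_le hγ.le hC l₁ l₂ m) (norm_nonneg _)
          (mul_nonneg hA.nonneg (exp_pos _).le)
    _ = a * (b * c) * (exp (-(γ * absZ (l₁ - n))) * exp (-(γ * absZ (l₂ - l₁)))) := by ring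
    _ ≤ a * (b * c) * (exp (-(γ / 2 * absZ (l₁ - n))) * exp (-(γ / 2 * absZ (l₂ - n)))) :=
        mul_le_mul_of_nonneg_left (exp_mul_exp_le_exp_half_mul hγ.le n l₁ l₂)
          (mul_nonneg hA.nonneg (mul_nonneg hB.nonneg hC.nonneg))
    _ = _ := by ring

variable {W : ℕ → Zd d → Zd d → ℂ} {u : ℕ → ℝ}

lemma matMul_tsum_right (hγ : 0 < γ) (hA : ExpBounded γ a A) (hu : Summable u)
    (hW : ∀ i, ExpBounded γ (u i) (W i)) :
    matMul A (fun n m => ∑' i, W i n m) = fun n m => ∑' i, matMul A (W i) n m := by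
  funext n m
  simp only [matMul, ← tsum_mul_left]
  exact tsum_comm_of_norm_le_mul ((summable_exp_neg_mul_absZ_sub hγ n).mul_left a) hu
    (fun _ => mul_nonneg hA.nonneg (exp_pos _).le) (fun i => (hW i).nonneg)
    fun l i => (hA.norm_mul_le hγ.le (hW i) n l m).trans_eq (by ring)

lemma matMul_tsum_left (hγ : 0 < γ) (hA : ExpBounded γ a A) (hu : Summable u)
    (hW : ∀ i, ExpBounded γ (u i) (W i)) :
    matMul (fun n m => ∑' i, W i n m) A = fun n m => ∑' i, matMul (W i) A n m := by
  funext n m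
  simp only [matMul, ← tsum_mul_right]
  exact tsum_comm_of_norm_le_mul ((summable_exp_neg_mul_absZ_sub hγ n).mul_left a) hu
    (fun _ => mul_nonneg hA.nonneg (exp_pos _).le) (fun i => (hW i).nonneg)
    fun l i => ((hW i).norm_mul_le hγ.le hA n l m).trans_eq (by ring)

/-- `∑_{i ≥ 1} B^i`, where `(matMul B)^[i] B = B^(i+1)`. -/
def neumannTail (B : Zd d → Zd d → ℂ) : Zd d → Zd d → ℂ :=
  fun n m => ∑' i : ℕ, (matMul B)^[i] B n m

variable (hγ : 0 < γ) (hW : ∀ i, ExpBounded γ (u i) ((matMul B)^[i] B))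
include hγ hW

lemma matMul_iterate_comm (i : ℕ) : matMul ((matMul B)^[i] B) B = (matMul B)^[i + 1] B := by
  induction i with
  | zero => rfl
  | succ i ih =>
    have hB : ExpBounded γ (u 0) B := hW 0
    rw [Function.iterate_succ_apply' _ i, matMul_assoc hγ hB (hW i) hB, ih,
      ← Function.iterate_succ_apply' (matMul B) (i + 1)]

variable (hu : Summable u)
include hu

lemma matMul_neumannTail : matMul B (neumannTail B) = neumannTail B - B := by
  have hB : ExpBounded γ (u 0) B := hW 0
  unfold neumannTail
  rw [matMul_tsum_right hγ hB hu hW]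
  funext n m
  simp_rw [← Function.iterate_succ_apply' (matMul B)]
  simp only [Pi.sub_apply]
  rw [(ExpBounded.summable hu hW n m).tsum_eq_zero_add]
  simp

lemma neumannTail_matMul : matMul (neumannTail B) B = neumannTail B - B := by
  have hB : ExpBounded γ (u 0) B := hW 0
  unfold neumannTail
  rw [matMul_tsum_left hγ hB hu hW]
  funext n m
  simp_rw [matMul_iterate_comm hγ hW]
  simp only [Pi.sub_apply]
  rw [(ExpBounded.summable hu hW n m).tsum_eq_zero_add]
  simp

lemma matMul_idMat_sub_idMat_add_neumannTail :
    matMul (idMat d - B) (idMat d + neumannTail B) = idMat d := by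
  have hS : ExpBounded γ (∑' i, u i) (neumannTail B) := ExpBounded.tsum hu hW
  have hI : ExpBounded γ 1 (idMat d) := expBounded_idMat
  have hB : ExpBounded γ (u 0) B := hW 0
  rw [matMul_sub_left (hI.summable_mul hγ (hI.add hS)) (hB.summable_mul hγ (hI.add hS)),
    matMul_idMat_left, matMul_add_right (hB.summable_mul hγ hI)
      (hB.summable_mul hγ hS), matMul_idMat_right, matMul_neumannTail hγ hW hu]
  abel

lemma matMul_idMat_add_neumannTail_idMat_sub :
    matMul (idMat d + neumannTail B) (idMat d - B) = idMat d := by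
  have hS : ExpBounded γ (∑' i, u i) (neumannTail B) := ExpBounded.tsum hu hW
  have hI : ExpBounded γ 1 (idMat d) := expBounded_idMat
  have hB : ExpBounded γ (u 0) B := hW 0
  rw [matMul_add_left (hI.summable_mul hγ (hI.sub hB)) (hS.summable_mul hγ (hI.sub hB)),
    matMul_idMat_left, matMul_sub_right (hS.summable_mul hγ hI) (hS.summable_mul hγ hB),
    matMul_idMat_right, neumannTail_matMul hγ hW hu]
  abel

lemma isMatInverse_idMat_sub_neumannTail :
    IsMatInverse (idMat d - B) (idMat d + neumannTail B) := by
  have hB : ExpBounded γ (u 0) B := hW 0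
  have hX := (expBounded_idMat (γ := γ)).sub hB
  have hY := (expBounded_idMat (γ := γ)).add (ExpBounded.tsum hu hW)
  exact ⟨hX.summable_norm_mul hγ hY, hY.summable_norm_mul hγ hX,
    matMul_idMat_sub_idMat_add_neumannTail hγ hW hu,
    matMul_idMat_add_neumannTail_idMat_sub hγ hW hu⟩

end Neumann

section DecayBound

variable {d : ℕ} {lam : Zd d → ℝ} {γ c : ℝ} {A : Zd d → Zd d → ℂ}

/-- A real form of `matNorm lam γ A ≤ c`: `P` and `Q` dominate the two parts of the T-norm
of each diagonal `A_k`, indexed by `k = m - n`. -/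
def HasDecayBound (lam : Zd d → ℝ) (γ c : ℝ) (A : Zd d → Zd d → ℂ) : Prop :=
  ∃ P Q : Zd d → ℝ, (∀ k, 0 ≤ P k) ∧ (∀ k, 0 ≤ Q k) ∧ (∀ k, P k + Q k ≤ c * exp (-(γ * absZ k))) ∧
    (∀ n m, ‖A n m‖ ≤ P (m - n)) ∧
    ∀ n m j, j ≠ 0 → ‖A (n + j) (m + j) - A n m‖ ≤ Q (m - n) * |lam j - lam 0|

lemma Tnorm_diag_le_of_matNorm_le (h : matNorm lam γ A ≤ ENNReal.ofReal c) (k : Zd d) :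
    Tnorm lam (fun n => A n (n + k)) ≤ ENNReal.ofReal (c * exp (-(γ * absZ k))) := by
  have hk := (le_iSup (fun k => ENNReal.ofReal (exp (γ * absZ k)) *
    Tnorm lam (fun n => A n (n + k))) k).trans h
  rw [exp_neg, ← div_eq_mul_inv, ENNReal.ofReal_div_of_pos (exp_pos _),
    ENNReal.le_div_iff_mul_le (by simp [exp_pos]) (by simp), mul_comm]
  exact hk

lemma HasDecayBound.of_matNorm_le (hl : ∀ j : Zd d, j ≠ 0 → lam j ≠ lam 0) (hc : 0 ≤ c)
    (h : matNorm lam γ A ≤ ENNReal.ofReal c) : HasDecayBound lam γ c A := by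
  set S₁ : Zd d → ℝ≥0∞ := fun k => ⨆ n, ENNReal.ofReal ‖A n (n + k)‖
  set S₂ : Zd d → ℝ≥0∞ := fun k => ⨆ n, ⨆ j : {j : Zd d // j ≠ 0},
    ENNReal.ofReal (‖A (n + j.1) (n + j.1 + k) - A n (n + k)‖ / |lam j.1 - lam 0|)
  have hS : ∀ k, S₁ k + S₂ k ≤ ENNReal.ofReal (c * exp (-(γ * absZ k))) :=
    Tnorm_diag_le_of_matNorm_le h
  have hS₁ : ∀ k, S₁ k ≠ ⊤ := fun k => ne_top_of_le_ne_top ENNReal.ofReal_ne_top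
    (le_self_add.trans (hS k))
  have hS₂ : ∀ k, S₂ k ≠ ⊤ := fun k => ne_top_of_le_ne_top ENNReal.ofReal_ne_top
    (le_add_self.trans (hS k))
  refine ⟨fun k => (S₁ k).toReal, fun k => (S₂ k).toReal, fun _ => ENNReal.toReal_nonneg,
    fun _ => ENNReal.toReal_nonneg, fun k => ?_, fun n m => ?_, fun n m j hj => ?_⟩
  · rw [← ENNReal.toReal_add (hS₁ k) (hS₂ k)]
    exact ENNReal.toReal_le_of_le_ofReal (by positivity) (hS k)
  · have h₁ : ENNReal.ofReal ‖A n (n + (m - n))‖ ≤ S₁ (m - n) := le_iSup_of_le n le_rfl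
    rwa [ENNReal.ofReal_le_iff_le_toReal (hS₁ _), add_sub_cancel] at h₁
  · have h₂ : ENNReal.ofReal (‖A (n + j) (n + j + (m - n)) - A n (n + (m - n))‖ /
        |lam j - lam 0|) ≤ S₂ (m - n) := le_iSup₂_of_le n ⟨j, hj⟩ le_rfl
    rwa [ENNReal.ofReal_le_iff_le_toReal (hS₂ _), add_sub_cancel, add_right_comm, add_sub_cancel,
      div_le_iff₀ (abs_pos.mpr (sub_ne_zero.mpr (hl j hj)))] at h₂

lemma matNorm_le_of_hasDecayBound (h : HasDecayBound lam γ c A) :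
    matNorm lam γ A ≤ ENNReal.ofReal c := by
  obtain ⟨P, Q, hP, hQ, hPQ, hA, hA'⟩ := h
  refine iSup_le fun k => ?_
  have hT : Tnorm lam (fun n => A n (n + k)) ≤ ENNReal.ofReal (P k + Q k) := by
    rw [ENNReal.ofReal_add (hP k) (hQ k)]
    refine add_le_add (iSup_le fun n => ENNReal.ofReal_le_ofReal ?_)
      (iSup₂_le fun n j => ENNReal.ofReal_le_ofReal ?_)
    · simpa using hA n (n + k)
    · refine div_le_of_le_mul₀ (abs_nonneg _) (hQ k) ?_
      simpa [add_right_comm n k] using hA' n (n + k) j.1 j.2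
  calc ENNReal.ofReal (exp (γ * absZ k)) * Tnorm lam (fun n => A n (n + k))
      ≤ ENNReal.ofReal (exp (γ * absZ k) * (c * exp (-(γ * absZ k)))) := by
        rw [ENNReal.ofReal_mul (exp_pos _).le]
        exact mul_le_mul_right (hT.trans (ENNReal.ofReal_le_ofReal (hPQ k))) _
    _ = ENNReal.ofReal c := by
        rw [mul_left_comm, ← exp_add, add_neg_cancel, exp_zero, mul_one]

lemma HasDecayBound.expBounded (h : HasDecayBound lam γ c A) : ExpBounded γ c A := by
  obtain ⟨P, Q, -, hQ, hPQ, hA, -⟩ := h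
  exact fun n m => (hA n m).trans (by linarith [hPQ (m - n), hQ (m - n)])

lemma HasDecayBound.mono (h : HasDecayBound lam γ c A) {γ' : ℝ} (hγ : γ' ≤ γ) :
    HasDecayBound lam γ' c A := by
  have hc := h.expBounded.nonneg
  obtain ⟨P, Q, hP, hQ, hPQ, hA⟩ := h
  refine ⟨P, Q, hP, hQ, fun k => (hPQ k).trans ?_, hA⟩
  gcongr
  nlinarith [absZ_nonneg k]

lemma HasDecayBound.neg (h : HasDecayBound lam γ c A) :
    HasDecayBound lam γ c (-A) := by
  obtain ⟨P, Q, hP, hQ, hPQ, hA, hA'⟩ := h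
  refine ⟨P, Q, hP, hQ, hPQ, fun n m => by simpa using hA n m, fun n m j hj => ?_⟩
  simpa [neg_add_eq_sub, norm_sub_rev] using hA' n m j hj

lemma HasDecayBound.tsum {W : ℕ → Zd d → Zd d → ℂ} {u : ℕ → ℝ} (hu : Summable u)
    (hW : ∀ i, HasDecayBound lam γ (u i) (W i)) :
    HasDecayBound lam γ (∑' i, u i) fun n m => ∑' i, W i n m := by
  choose P Q hP hQ hPQ hA hA' using hW
  have hsP : ∀ k, Summable fun i => P i k := fun k => .of_nonneg_of_le (fun i => hP i k)
    (fun i => by linarith [hPQ i k, hQ i k]) (hu.mul_right (exp (-(γ * absZ k))))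
  have hsQ : ∀ k, Summable fun i => Q i k := fun k => .of_nonneg_of_le (fun i => hQ i k)
    (fun i => by linarith [hPQ i k, hP i k]) (hu.mul_right (exp (-(γ * absZ k))))
  have hsW : ∀ n m, Summable fun i => W i n m := fun n m =>
    .of_norm_bounded (hsP (m - n)) fun i => hA i n m
  refine ⟨fun k => ∑' i, P i k, fun k => ∑' i, Q i k, fun k => tsum_nonneg fun i => hP i k,
    fun k => tsum_nonneg fun i => hQ i k, fun k => ?_, fun n m => ?_, fun n m j hj => ?_⟩
  · rw [← (hsP k).tsum_add (hsQ k), ← tsum_mul_right]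
    exact ((hsP k).add (hsQ k)).tsum_le_tsum (fun i => hPQ i k) (hu.mul_right _)
  · exact tsum_of_norm_bounded (hsP (m - n)).hasSum fun i => hA i n m
  · rw [← (hsW _ _).tsum_sub (hsW n m), ← tsum_mul_right]
    exact tsum_of_norm_bounded ((hsQ (m - n)).mul_right _).hasSum fun i => hA' i n m j hj

end DecayBound

section Product

variable {d : ℕ} {lam : Zd d → ℝ} {A B : Zd d → Zd d → ℂ} {P₁ Q₁ P₂ Q₂ : Zd d → ℝ}

lemma norm_mul_shift_le (hA : ∀ n m, ‖A n m‖ ≤ P₁ (m - n)) (hB : ∀ n m, ‖B n m‖ ≤ P₂ (m - n))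
    (n m t : Zd d) : ‖A n (n + t) * B (n + t) m‖ ≤ P₁ t * P₂ (m - n - t) := by
  have h₁ := hA n (n + t)
  have h₂ := hB (n + t) m
  rw [add_sub_cancel_left] at h₁
  rw [sub_add_eq_sub_sub] at h₂
  rw [norm_mul]
  exact mul_le_mul h₁ h₂ (norm_nonneg _) ((norm_nonneg _).trans h₁)

lemma norm_matMul_le (hA : ∀ n m, ‖A n m‖ ≤ P₁ (m - n)) (hB : ∀ n m, ‖B n m‖ ≤ P₂ (m - n))
    {n m : Zd d} (hs : Summable fun t => P₁ t * P₂ (m - n - t)) :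
    ‖matMul A B n m‖ ≤ ∑' t, P₁ t * P₂ (m - n - t) := by
  rw [matMul_apply_eq_tsum_add]
  exact tsum_of_norm_bounded hs.hasSum (norm_mul_shift_le hA hB n m)

/-- A discrete Leibniz rule: `A'B' - AB = (A' - A) B' + A (B' - B)` under the sum over `l`. -/
lemma norm_matMul_shift_sub_le (hA : ∀ n m, ‖A n m‖ ≤ P₁ (m - n))
    (hA' : ∀ n m j, j ≠ 0 → ‖A (n + j) (m + j) - A n m‖ ≤ Q₁ (m - n) * |lam j - lam 0|)
    (hB : ∀ n m, ‖B n m‖ ≤ P₂ (m - n))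
    (hB' : ∀ n m j, j ≠ 0 → ‖B (n + j) (m + j) - B n m‖ ≤ Q₂ (m - n) * |lam j - lam 0|)
    {n m j : Zd d} (hj : j ≠ 0) (hs₁ : Summable fun t => P₁ t * P₂ (m - n - t))
    (hs₂ : Summable fun t => Q₁ t * P₂ (m - n - t) + P₁ t * Q₂ (m - n - t)) :
    ‖matMul A B (n + j) (m + j) - matMul A B n m‖
      ≤ (∑' t, (Q₁ t * P₂ (m - n - t) + P₁ t * Q₂ (m - n - t))) * |lam j - lam 0| := by
  have hshift := norm_mul_shift_le hA hB (n + j) (m + j)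
  simp only [add_sub_add_right_eq_sub] at hshift
  rw [matMul_apply_eq_tsum_add, matMul_apply_eq_tsum_add,
    ← (Summable.of_norm_bounded hs₁ hshift).tsum_sub
      (.of_norm_bounded hs₁ (norm_mul_shift_le hA hB n m)), ← tsum_mul_right]
  refine tsum_of_norm_bounded (hs₂.mul_right _).hasSum fun t => ?_
  have h₁ := hA' n (n + t) j hj
  have h₂ := hB (n + t + j) (m + j)
  have h₃ := hA n (n + t)
  have h₄ := hB' (n + t) m j hj
  rw [add_sub_add_right_eq_sub, sub_add_eq_sub_sub] at h₂
  simp only [add_sub_cancel_left, sub_add_eq_sub_sub] at h₁ h₃ h₄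
  rw [add_right_comm n j t, show ∀ x' y' x y : ℂ, x' * y' - x * y = (x' - x) * y' + x * (y' - y)
    by intros; ring]
  refine (norm_add_le _ _).trans ?_
  rw [norm_mul, norm_mul]
  calc _ ≤ Q₁ t * |lam j - lam 0| * P₂ (m - n - t) + P₁ t * (Q₂ (m - n - t) * |lam j - lam 0|) :=
        add_le_add (mul_le_mul h₁ h₂ (norm_nonneg _) ((norm_nonneg _).trans h₁))
          (mul_le_mul h₃ h₄ (norm_nonneg _) ((norm_nonneg _).trans h₃))
    _ = _ := by ring

variable {α δ a b : ℝ}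

section Envelope

variable {F G : Zd d → ℝ} (hδ : 0 < δ) (hδα : δ ≤ α) (hF : ∀ k, 0 ≤ F k) (hG : ∀ k, 0 ≤ G k)
  (hFa : ∀ k, F k ≤ a * exp (-(α * absZ k))) (hGb : ∀ k, G k ≤ b * exp (-((α - δ) * absZ k)))
include hδ hδα hF hG hFa hGb

lemma summable_mul_sub_of_le_exp (k : Zd d) : Summable fun t => F t * G (k - t) :=
  .of_nonneg_of_le (fun t => mul_nonneg (hF t) (hG _))
    (fun t => (mul_le_mul (hFa t) (hGb _) (hG _) ((hF t).trans (hFa t))).trans_eq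
      (mul_mul_mul_comm _ _ _ _))
    ((summable_exp_mul_exp hδ hδα k).mul_left (a * b))

lemma tsum_mul_sub_le_of_le_exp (k : Zd d) :
    ∑' t, F t * G (k - t) ≤ expSum d δ * a * b * exp (-((α - δ) * absZ k)) := by
  have hab : 0 ≤ a * b := mul_nonneg (nonneg_of_mul_nonneg_left ((hF 0).trans (hFa 0)) (exp_pos _))
    (nonneg_of_mul_nonneg_left ((hG 0).trans (hGb 0)) (exp_pos _))
  calc ∑' t, F t * G (k - t)
      ≤ ∑' t, a * b * (exp (-(α * absZ t)) * exp (-((α - δ) * absZ (k - t)))) :=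
        (summable_mul_sub_of_le_exp hδ hδα hF hG hFa hGb k).tsum_le_tsum
          (fun t => (mul_le_mul (hFa t) (hGb _) (hG _) ((hF t).trans (hFa t))).trans_eq
            (mul_mul_mul_comm _ _ _ _))
          ((summable_exp_mul_exp hδ hδα k).mul_left _)
    _ ≤ a * b * (expSum d δ * exp (-((α - δ) * absZ k))) := by
        rw [tsum_mul_left]
        exact mul_le_mul_of_nonneg_left (tsum_exp_mul_exp_le hδ hδα k) hab
    _ = expSum d δ * a * b * exp (-((α - δ) * absZ k)) := by ring

end Envelope

lemma HasDecayBound.mul (hδ : 0 < δ) (hδα : δ ≤ α) (hA : HasDecayBound lam α a A)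
    (hB : HasDecayBound lam (α - δ) b B) :
    HasDecayBound lam (α - δ) (expSum d δ * a * b) (matMul A B) := by
  obtain ⟨P₁, Q₁, hP₁, hQ₁, hPQ₁, hA, hA'⟩ := hA
  obtain ⟨P₂, Q₂, hP₂, hQ₂, hPQ₂, hB, hB'⟩ := hB
  have hR₁ : ∀ t, 0 ≤ P₁ t + Q₁ t := fun t => add_nonneg (hP₁ t) (hQ₁ t)
  have hR₂ : ∀ t, 0 ≤ P₂ t + Q₂ t := fun t => add_nonneg (hP₂ t) (hQ₂ t)
  have hR := summable_mul_sub_of_le_exp hδ hδα hR₁ hR₂ hPQ₁ hPQ₂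
  have hs₁ : ∀ k, Summable fun t => P₁ t * P₂ (k - t) := fun k =>
    .of_nonneg_of_le (fun t => mul_nonneg (hP₁ t) (hP₂ _))
      (fun t => by nlinarith [hP₁ t, hQ₁ t, hP₂ (k - t), hQ₂ (k - t)]) (hR k)
  have hs₂ : ∀ k, Summable fun t => Q₁ t * P₂ (k - t) + P₁ t * Q₂ (k - t) := fun k =>
    .of_nonneg_of_le (fun t => add_nonneg (mul_nonneg (hQ₁ t) (hP₂ _))
      (mul_nonneg (hP₁ t) (hQ₂ _)))
      (fun t => by nlinarith [hP₁ t, hQ₁ t, hP₂ (k - t), hQ₂ (k - t)]) (hR k)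
  refine ⟨fun k => ∑' t, P₁ t * P₂ (k - t), fun k => ∑' t, (Q₁ t * P₂ (k - t) + P₁ t * Q₂ (k - t)),
    fun k => tsum_nonneg fun t => mul_nonneg (hP₁ t) (hP₂ _),
    fun k => tsum_nonneg fun t => add_nonneg (mul_nonneg (hQ₁ t) (hP₂ _))
      (mul_nonneg (hP₁ t) (hQ₂ _)), fun k => ?_,
    fun n m => norm_matMul_le hA hB (hs₁ _),
    fun n m j hj => norm_matMul_shift_sub_le hA hA' hB hB' hj (hs₁ _) (hs₂ _)⟩
  rw [← (hs₁ k).tsum_add (hs₂ k)]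
  refine (((hs₁ k).add (hs₂ k)).tsum_le_tsum (fun t => ?_) (hR k)).trans
    (tsum_mul_sub_le_of_le_exp hδ hδα hR₁ hR₂ hPQ₁ hPQ₂ k)
  nlinarith [mul_nonneg (hQ₁ t) (hQ₂ (k - t))]

end Product

section NeumannBound

variable {d : ℕ} {lam : Zd d → ℝ} {α δ ε : ℝ} {B : Zd d → Zd d → ℂ}

lemma HasDecayBound.iterate_matMul (hδ : 0 < δ) (hδα : δ ≤ α) (hB : HasDecayBound lam α ε B)
    (i : ℕ) : HasDecayBound lam (α - δ) (ε * (expSum d δ * ε) ^ i) ((matMul B)^[i] B) := by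
  induction i with
  | zero => simpa using hB.mono (sub_le_self α hδ.le)
  | succ i ih =>
    rw [Function.iterate_succ_apply']
    convert hB.mul hδ hδα ih using 1
    ring

lemma hasDecayBound_neumannTail (hδ : 0 < δ) (hδα : δ ≤ α) (hB : HasDecayBound lam α ε B)
    (hr : expSum d δ * ε < 1) :
    HasDecayBound lam (α - δ) (ε / (1 - expSum d δ * ε)) (neumannTail B) := by
  have hr0 : 0 ≤ expSum d δ * ε := mul_nonneg (expSum_nonneg) hB.expBounded.nonneg
  have := HasDecayBound.tsum ((summable_geometric_of_lt_one hr0 hr).mul_left ε)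
    (hB.iterate_matMul hδ hδα)
  rwa [tsum_mul_left, tsum_geometric_of_lt_one hr0 hr, ← div_eq_mul_inv] at this

lemma HasDecayBound.isMatInverse_neumannTail (hδ : 0 < δ) (hδα : δ < α)
    (hB : HasDecayBound lam α ε B) (hr : expSum d δ * ε < 1) :
    IsMatInverse (idMat d - B) (idMat d + neumannTail B) := by
  have hr0 : 0 ≤ expSum d δ * ε := mul_nonneg expSum_nonneg hB.expBounded.nonneg
  exact isMatInverse_idMat_sub_neumannTail (sub_pos.2 hδα)
    (fun i => (hB.iterate_matMul hδ hδα.le i).expBounded)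
    ((summable_geometric_of_lt_one hr0 hr).mul_left ε)

end NeumannBound

theorem neumann_series_inverse_estimate_general
    (d : ℕ)
    (lam : Zd d → ℝ) (hl0 : ∀ j : Zd d, j ≠ 0 → lam j ≠ lam 0)
    (α δ : ℝ) (hδ : 0 < δ) (hδα : δ < α) (hδ1 : δ ≤ 1)
    (X : Zd d → Zd d → ℂ)
    (hX : matNorm lam α (fun n m => X n m - idMat d n m) <
      ENNReal.ofReal ((δ / 3) ^ d)) :
    ∃ Y : Zd d → Zd d → ℂ,
      (∀ n m : Zd d, Summable fun l : Zd d => ‖X n l * Y l m‖) ∧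
      (∀ n m : Zd d, Summable fun l : Zd d => ‖Y n l * X l m‖) ∧
      (∀ n m : Zd d, ∑' l : Zd d, X n l * Y l m = idMat d n m) ∧
      (∀ n m : Zd d, ∑' l : Zd d, Y n l * X l m = idMat d n m) ∧
      matNorm lam (α - δ) (fun n m => Y n m - idMat d n m) ≠ ⊤ ∧
      (matNorm lam (α - δ) (fun n m => Y n m - idMat d n m)).toReal ≤
        (matNorm lam α (fun n m => X n m - idMat d n m)).toReal /
          (1 - (3 / δ) ^ d *
            (matNorm lam α (fun n m => X n m - idMat d n m)).toReal) := by
  have hfin := hX.ne_top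
  set ε := (matNorm lam α (fun n m => X n m - idMat d n m)).toReal
  have hε0 : 0 ≤ ε := ENNReal.toReal_nonneg
  have hK : (3 / δ) ^ d * ε < 1 := by
    rw [← lt_div_iff₀' (by positivity), one_div, ← inv_pow, inv_div]
    exact (ENNReal.lt_ofReal_iff_toReal_lt hfin).mp hX
  have hEK : expSum d δ * ε ≤ (3 / δ) ^ d * ε := mul_le_mul_of_nonneg_right (expSum_le hδ hδ1) hε0
  have hB : HasDecayBound lam α ε (idMat d - X) := by
    convert (HasDecayBound.of_matNorm_le hl0 hε0 (ENNReal.ofReal_toReal hfin).ge).neg using 1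
    funext n m
    simp
  have hS := hasDecayBound_neumannTail hδ hδα.le hB (hEK.trans_lt hK)
  have hinv := hB.isMatInverse_neumannTail hδ hδα (hEK.trans_lt hK)
  rw [sub_sub_cancel] at hinv
  obtain ⟨hXY, hYX, hXY', hYX'⟩ := hinv
  refine ⟨_, hXY, hYX, fun n m => congrFun (congrFun hXY' n) m,
    fun n m => congrFun (congrFun hYX' n) m, ?_⟩
  simp only [Pi.add_apply, add_sub_cancel_left]
  have hS' := matNorm_le_of_hasDecayBound hS
  refine ⟨ne_top_of_le_ne_top ENNReal.ofReal_ne_top hS',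
    (ENNReal.toReal_le_of_le_ofReal hS.expBounded.nonneg hS').trans ?_⟩
  exact div_le_div_of_nonneg_left hε0 (sub_pos.2 hK) (sub_le_sub_left hEK 1)

theorem neumann_series_inverse_estimate
    (d : ℕ) (hd : 1 ≤ d)
    (lam : Zd d → ℝ) (hl0 : ∀ j : Zd d, j ≠ 0 → lam j ≠ lam 0)
    (α δ : ℝ) (hα : 0 < α) (hδ : 0 < δ) (hδα : δ < α) (hδ1 : δ ≤ 1)
    (X : Zd d → Zd d → ℂ)
    (hX : matNorm lam α (fun n m => X n m - idMat d n m) <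
      ENNReal.ofReal ((δ / 3) ^ d)) :
    ∃ Y : Zd d → Zd d → ℂ,
      (∀ n m : Zd d, Summable fun l : Zd d => ‖X n l * Y l m‖) ∧
      (∀ n m : Zd d, Summable fun l : Zd d => ‖Y n l * X l m‖) ∧
      (∀ n m : Zd d, ∑' l : Zd d, X n l * Y l m = idMat d n m) ∧
      (∀ n m : Zd d, ∑' l : Zd d, Y n l * X l m = idMat d n m) ∧
      matNorm lam (α - δ) (fun n m => Y n m - idMat d n m) ≠ ⊤ ∧
      (matNorm lam (α - δ) (fun n m => Y n m - idMat d n m)).toReal ≤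
        (matNorm lam α (fun n m => X n m - idMat d n m)).toReal /
          (1 - (3 / δ) ^ d *
            (matNorm lam α (fun n m => X n m - idMat d n m)).toReal) :=
  neumann_series_inverse_estimate_general d lam hl0 α δ hδ hδα hδ1 X hX
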